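/- arXiv:1612.07247 — 2 statements merged into one kernel-verified Lean document; each statement's English description precedes it below -/
import Mathlib

section
/- Let H be a k-graph on n vertices with δ_{k-1}(H) ≥ a_1 n/m and a partition V = A ∪ B with |A| = a_1 n/m, |B| = (m - a_1)n/m, and e(B) ≤ ξ·C(|B|, k). Define A' = {v ∈ V : deg-complement(v, B) ≤ ε_2·C(|B|, k-1)} where ε_2 = ξ^{1/3} and ε_3 = 2ξ^{2/3}. Then |A \ A'| ≤ ε_3·|B| (for n sufficiently large). -/
open Finset
open scoped Classical

lemma deg_vertex_eq {n k : ℕ} (H : Finset (Finset (Fin n)))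
    (hHcard : ∀ e ∈ H, e.card = k) (B : Finset (Fin n)) (v : Fin n) (hv : v ∉ B) :
    (H.filter (fun e => v ∈ e ∧ e \ {v} ⊆ B)).card
      = ((B.powersetCard (k-1)).filter (fun S => insert v S ∈ H)).card := by
  apply Finset.card_bij (fun e _ => e.erase v)
  · intro e he
    simp only [Finset.mem_filter] at he
    obtain ⟨heH, hve, heB⟩ := he
    simp only [Finset.mem_filter, Finset.mem_powersetCard]
    refine ⟨⟨by rwa [Finset.erase_eq], ?_⟩, ?_⟩
    · rw [Finset.card_erase_of_mem hve, hHcard e heH]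
    · rw [Finset.insert_erase hve]; exact heH
  · intro e₁ he₁ e₂ he₂ h
    simp only [Finset.mem_filter] at he₁ he₂
    rw [← Finset.insert_erase he₁.2.1, ← Finset.insert_erase he₂.2.1, h]
  · intro S hS
    simp only [Finset.mem_filter, Finset.mem_powersetCard] at hS
    obtain ⟨⟨hSB, hScard⟩, hSH⟩ := hS
    have hvS : v ∉ S := fun h => hv (hSB h)
    refine ⟨insert v S, ?_, Finset.erase_insert hvS⟩
    simp only [Finset.mem_filter]
    refine ⟨hSH, Finset.mem_insert_self _ _, ?_⟩
    rw [← Finset.erase_eq, Finset.erase_insert hvS]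
    exact hSB

lemma deg_set_eq {n k : ℕ} (hk : 1 ≤ k) (H : Finset (Finset (Fin n)))
    (hHcard : ∀ e ∈ H, e.card = k)
    (p : Finset (Fin n) → Prop) [DecidablePred p] (S : Finset (Fin n)) (hS : S.card = k - 1) :
    (Finset.univ.filter (fun v => v ∉ S ∧ insert v S ∈ H ∧ p (insert v S))).card
      = (H.filter (fun e => S ⊆ e ∧ p e)).card := by
  apply Finset.card_bij (fun v _ => insert v S)
  · intro v hv
    simp only [Finset.mem_filter, Finset.mem_univ, true_and] at hv
    simp only [Finset.mem_filter]
    exact ⟨hv.2.1, Finset.subset_insert _ _, hv.2.2⟩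
  · intro v₁ hv₁ v₂ hv₂ h
    simp only [Finset.mem_filter, Finset.mem_univ, true_and] at hv₁ hv₂
    have : v₁ ∈ insert v₂ S := h ▸ Finset.mem_insert_self v₁ S
    rcases Finset.mem_insert.mp this with h' | h'
    · exact h'
    · exact absurd h' hv₁.1
  · intro e he
    simp only [Finset.mem_filter] at he
    obtain ⟨heH, hSe, hpe⟩ := he
    have hcard : (e \ S).card = 1 := by
      rw [Finset.card_sdiff_of_subset hSe, hHcard e heH, hS]
      omega
    obtain ⟨v, hv⟩ := Finset.card_eq_one.mp hcard
    have hvS : v ∉ S ∧ v ∈ e := by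
      have : v ∈ e \ S := hv ▸ Finset.mem_singleton_self v
      exact ⟨(Finset.mem_sdiff.mp this).2, (Finset.mem_sdiff.mp this).1⟩
    have hins : insert v S = e := by
      rw [Finset.insert_eq, Finset.union_comm, ← hv, Finset.union_sdiff_of_subset hSe]
    refine ⟨v, ?_, hins⟩
    simp only [Finset.mem_filter, Finset.mem_univ, true_and]
    rw [hins]
    exact ⟨hvS.1, heH, hpe⟩

/-- Let `H` be a `k`-graph on `n` vertices (`n ∈ mℕ` sufficiently large) with
`δ_{k-1}(H) ≥ a₁n/m` and partition `V = A ∪ B`, `|A| = a₁n/m`, `|B| = (m-a₁)n/m`,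
`e(B) ≤ ξ·C(|B|,k)`. With `ε₂ = ξ^{1/3}`, `ε₃ = 2ξ^{2/3}` and
`A' = {v : C(|B|,k-1) - deg(v,B) ≤ ε₂·C(|B|,k-1)}`, we have `|A \ A'| ≤ ε₃·|B|`. -/
theorem size_A_minus_A' (k m : ℕ) (a : Fin k → ℕ) (hk : 3 ≤ k)
    (hmono : Monotone a) (hpos : 0 < a ⟨0, by omega⟩) (hm : m = ∑ i, a i)
    (ξ : ℝ) (hξ0 : 0 < ξ) (hξ1 : ξ < 1 / (m : ℝ)) :
    ∃ N : ℕ, ∀ n : ℕ, N ≤ n → m ∣ n →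
      ∀ H : Finset (Finset (Fin n)), (∀ e ∈ H, e.card = k) →
      (∀ S : Finset (Fin n), S.card = k - 1 →
        (a ⟨0, by omega⟩ : ℝ) * n / m ≤ ((H.filter (fun e => S ⊆ e)).card : ℝ)) →
      ∀ B : Finset (Fin n), B.card * m = (m - a ⟨0, by omega⟩) * n →
      ((H.filter (fun e => e ⊆ B)).card : ℝ) ≤ ξ * ((B.card.choose k) : ℝ) →
      ((Bᶜ.filter (fun v =>
          ¬ ((((B.card.choose (k - 1)) : ℝ)
              - ((H.filter (fun e => v ∈ e ∧ e \ {v} ⊆ B)).card : ℝ))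
            ≤ ξ ^ ((1 : ℝ) / 3) * ((B.card.choose (k - 1)) : ℝ)))).card : ℝ)
        ≤ 2 * ξ ^ ((2 : ℝ) / 3) * (B.card : ℝ) := by
  have h0k : 0 < k := by omega
  have hk1 : 1 ≤ k := by omega
  refine ⟨k * m, fun n hn hmn H hHcard hdeg B hB heB => ?_⟩
  set b := B.card with hbdef
  set C := b.choose (k-1) with hCdef
  set a0 := a ⟨0, h0k⟩ with ha0def
  have hpos' : 0 < a0 := hpos
  have hdeg' : ∀ S : Finset (Fin n), S.card = k - 1 →
      (a0 : ℝ) * n / m ≤ ((H.filter (fun e => S ⊆ e)).card : ℝ) := hdeg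
  have hB' : b * m = (m - a0) * n := hB
  -- basic arithmetic facts
  have hma : k * a0 ≤ m := by
    rw [hm]
    calc k * a0 = ∑ _i : Fin k, a0 := by simp [mul_comm]
      _ ≤ ∑ i, a i := Finset.sum_le_sum fun i _ => hmono (by simp [Fin.le_def])
  have hm0 : 0 < m := by
    have : 3 * 1 ≤ k * a0 := Nat.mul_le_mul hk hpos'
    omega
  have ha0m : a0 < m := by
    have h3 : 3 * a0 ≤ k * a0 := Nat.mul_le_mul_right _ hk
    omega
  have hbk : k ≤ b := by
    have h1 : n ≤ b * m := by
      have h2 : 1 ≤ m - a0 := by omega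
      calc n = 1 * n := (one_mul n).symm
        _ ≤ (m - a0) * n := Nat.mul_le_mul_right n h2
        _ = b * m := hB'.symm
    exact Nat.le_of_mul_le_mul_right (le_trans hn h1) hm0
  have hbn : b ≤ n := by
    have := Finset.card_le_univ B
    simpa [hbdef] using this
  have hA : (n - b) * m = a0 * n := by
    have h1 : (m - a0) * n = m * n - a0 * n := Nat.sub_mul m a0 n
    have h2 : (n - b) * m = n * m - b * m := Nat.sub_mul n b m
    have h3 : a0 * n ≤ m * n := Nat.mul_le_mul_right n ha0m.le
    rw [h2, hB', h1, Nat.mul_comm n m]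
    omega
  have hAc : Bᶜ.card = n - b := by
    simp [Finset.card_compl, hbdef]
  have hmR : (m : ℝ) ≠ 0 := Nat.cast_ne_zero.mpr hm0.ne'
  have hAcR : (Bᶜ.card : ℝ) = a0 * n / m := by
    rw [hAc, eq_div_iff hmR]
    exact_mod_cast hA
  set pc := B.powersetCard (k-1) with hpcdef
  have hpcC : pc.card = C := by rw [hpcdef, Finset.card_powersetCard, hCdef]
  -- per-vertex: degree vs powerset filter
  have hdv : ∀ v ∈ Bᶜ, (H.filter (fun e => v ∈ e ∧ e \ {v} ⊆ B)).card
      = (pc.filter (fun S => insert v S ∈ H)).card :=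
    fun v hv => deg_vertex_eq H hHcard B v (Finset.mem_compl.mp hv)
  have hdvC : ∀ v : Fin n, (pc.filter (fun S => insert v S ∈ H)).card
      + (pc.filter (fun S => ¬ insert v S ∈ H)).card = C := by
    intro v
    rw [Finset.card_filter_add_card_filter_not, hpcC]
  -- per-S bound
  have hperS : ∀ S ∈ pc, ((Bᶜ.filter fun v => ¬ insert v S ∈ H).card : ℝ)
      ≤ ((H.filter fun e => S ⊆ e ∧ e ⊆ B).card : ℝ) := by
    intro S hS
    obtain ⟨hSB, hScard⟩ := Finset.mem_powersetCard.mp hS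
    have hDB : (univ.filter fun v => v ∉ S ∧ insert v S ∈ H ∧ insert v S ⊆ B).card
        = (H.filter fun e => S ⊆ e ∧ e ⊆ B).card := by
      simpa using deg_set_eq hk1 H hHcard (fun e => e ⊆ B) S hScard
    have hDS : (univ.filter fun v => v ∉ S ∧ insert v S ∈ H).card
        = (H.filter fun e => S ⊆ e).card := by
      have := deg_set_eq hk1 H hHcard (fun _ => True) S hScard
      simpa using this
    have hsplit : (univ.filter fun v => v ∉ S ∧ insert v S ∈ H).card
        = (univ.filter fun v => v ∉ S ∧ insert v S ∈ H ∧ insert v S ⊆ B).card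
          + (Bᶜ.filter fun v => insert v S ∈ H).card := by
      rw [← Finset.card_filter_add_card_filter_not
        (s := univ.filter fun v => v ∉ S ∧ insert v S ∈ H) (p := fun v => v ∈ B)]
      congr 1
      · rw [Finset.filter_filter]
        apply congrArg Finset.card
        apply Finset.filter_congr
        intro v _
        simp only [Finset.insert_subset_iff]
        constructor
        · rintro ⟨⟨h1, h2⟩, h3⟩; exact ⟨h1, h2, h3, hSB⟩
        · rintro ⟨h1, h2, h3, _⟩; exact ⟨⟨h1, h2⟩, h3⟩
      · rw [Finset.filter_filter]
        apply congrArg Finset.card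
        ext v
        simp only [Finset.mem_filter, Finset.mem_univ, true_and, Finset.mem_compl]
        constructor
        · rintro ⟨⟨h1, h2⟩, h3⟩; exact ⟨h3, h2⟩
        · rintro ⟨h1, h2⟩; exact ⟨⟨fun hvS => h1 (hSB hvS), h2⟩, h1⟩
    have hpartA : (Bᶜ.filter fun v => insert v S ∈ H).card
        + (Bᶜ.filter fun v => ¬ insert v S ∈ H).card = Bᶜ.card :=
      Finset.card_filter_add_card_filter_not _
    have hkey : (Bᶜ.filter fun v => ¬ insert v S ∈ H).card
        + (H.filter fun e => S ⊆ e).card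
        = Bᶜ.card + (H.filter fun e => S ⊆ e ∧ e ⊆ B).card := by
      omega
    have hdS := hdeg' S hScard
    have hkeyR : ((Bᶜ.filter fun v => ¬ insert v S ∈ H).card : ℝ)
        + ((H.filter fun e => S ⊆ e).card : ℝ)
        = (Bᶜ.card : ℝ) + ((H.filter fun e => S ⊆ e ∧ e ⊆ B).card : ℝ) := by
      exact_mod_cast congrArg (Nat.cast : ℕ → ℝ) hkey
    rw [hAcR] at hkeyR
    linarith
  -- sum swap
  have hswap : ∑ v ∈ Bᶜ, ((pc.filter fun S => ¬ insert v S ∈ H).card)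
      = ∑ S ∈ pc, ((Bᶜ.filter fun v => ¬ insert v S ∈ H).card) := by
    simp only [Finset.card_filter]
    exact Finset.sum_comm
  -- the double count of edges inside B
  have h5 : ∑ S ∈ pc, (H.filter fun e => S ⊆ e ∧ e ⊆ B).card
      = (H.filter fun e => e ⊆ B).card * k := by
    calc ∑ S ∈ pc, (H.filter fun e => S ⊆ e ∧ e ⊆ B).card
        = ∑ S ∈ pc, ∑ e ∈ H.filter (fun e => e ⊆ B), (if S ⊆ e then 1 else 0) := by
          refine Finset.sum_congr rfl fun S hS => ?_
          rw [← Finset.card_filter, Finset.filter_filter]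
          apply congrArg Finset.card
          exact Finset.filter_congr fun e _ => and_comm
      _ = ∑ e ∈ H.filter (fun e => e ⊆ B), ∑ S ∈ pc, (if S ⊆ e then 1 else 0) :=
          Finset.sum_comm
      _ = ∑ e ∈ H.filter (fun e => e ⊆ B), k := by
          refine Finset.sum_congr rfl fun e he => ?_
          rw [← Finset.card_filter]
          obtain ⟨heH, heB'⟩ := Finset.mem_filter.mp he
          have hpe : pc.filter (fun S => S ⊆ e) = e.powersetCard (k-1) := by
            ext S
            simp only [hpcdef, Finset.mem_filter, Finset.mem_powersetCard]
            constructor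
            · rintro ⟨⟨_, h2⟩, h3⟩; exact ⟨h3, h2⟩
            · rintro ⟨h1, h2⟩; exact ⟨⟨h1.trans heB', h2⟩, h1⟩
          rw [hpe, Finset.card_powersetCard, hHcard e heH,
            Nat.choose_symm (by omega), Nat.choose_one_right]
      _ = (H.filter fun e => e ⊆ B).card * k := by
          rw [Finset.sum_const, smul_eq_mul]
  -- choose identity
  have hch : (C : ℕ) * (b - (k-1)) = k * b.choose k := by
    have h := Nat.choose_succ_right_eq b (k-1)
    rw [show k - 1 + 1 = k from by omega] at h
    rw [hCdef, ← h, Nat.mul_comm]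
  -- positivity facts
  have hC0 : 0 < C := Nat.choose_pos (by omega)
  set ε₂ : ℝ := ξ ^ ((1:ℝ)/3) with hε₂def
  have hε₂0 : 0 < ε₂ := Real.rpow_pos_of_pos hξ0 _
  set bad := (Bᶜ.filter (fun v =>
      ¬ (((C : ℝ) - ((H.filter (fun e => v ∈ e ∧ e \ {v} ⊆ B)).card : ℝ))
        ≤ ε₂ * (C : ℝ)))) with hbaddef
  show (bad.card : ℝ) ≤ 2 * ξ ^ ((2:ℝ)/3) * b
  have hbadsub : bad ⊆ Bᶜ := Finset.filter_subset _ _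
  -- step 1
  have h1 : (bad.card : ℝ) * (ε₂ * C) ≤ ∑ v ∈ bad,
      ((C : ℝ) - ((H.filter (fun e => v ∈ e ∧ e \ {v} ⊆ B)).card : ℝ)) := by
    have := Finset.card_nsmul_le_sum bad
      (fun v => (C : ℝ) - ((H.filter (fun e => v ∈ e ∧ e \ {v} ⊆ B)).card : ℝ))
      (ε₂ * C) ?_
    · simpa [nsmul_eq_mul] using this
    · intro v hv
      have h' := lt_of_not_ge (Finset.mem_filter.mp hv).2
      show ε₂ * (C:ℝ) ≤ (C : ℝ) - ((H.filter (fun e => v ∈ e ∧ e \ {v} ⊆ B)).card : ℝ)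
      linarith
  -- step 2
  have h2 : ∑ v ∈ bad, ((C : ℝ) - ((H.filter (fun e => v ∈ e ∧ e \ {v} ⊆ B)).card : ℝ))
      ≤ ∑ v ∈ Bᶜ, ((C : ℝ) - ((H.filter (fun e => v ∈ e ∧ e \ {v} ⊆ B)).card : ℝ)) := by
    apply Finset.sum_le_sum_of_subset_of_nonneg hbadsub
    intro v hv _
    have hle : (H.filter (fun e => v ∈ e ∧ e \ {v} ⊆ B)).card ≤ C := by
      rw [hdv v hv]
      have := hdvC v
      omega
    have : ((H.filter (fun e => v ∈ e ∧ e \ {v} ⊆ B)).card : ℝ) ≤ C := by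
      exact_mod_cast hle
    linarith
  -- step 3
  have h3 : ∑ v ∈ Bᶜ, ((C : ℝ) - ((H.filter (fun e => v ∈ e ∧ e \ {v} ⊆ B)).card : ℝ))
      = ∑ S ∈ pc, ((Bᶜ.filter fun v => ¬ insert v S ∈ H).card : ℝ) := by
    calc ∑ v ∈ Bᶜ, ((C : ℝ) - ((H.filter (fun e => v ∈ e ∧ e \ {v} ⊆ B)).card : ℝ))
        = ∑ v ∈ Bᶜ, ((pc.filter fun S => ¬ insert v S ∈ H).card : ℝ) := by
          refine Finset.sum_congr rfl fun v hv => ?_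
          have h := hdvC v
          have h' := hdv v hv
          have hcast : ((pc.filter fun S => insert v S ∈ H).card : ℝ)
              + ((pc.filter fun S => ¬ insert v S ∈ H).card : ℝ) = C := by
            exact_mod_cast congrArg (Nat.cast : ℕ → ℝ) h
          rw [h']
          linarith
      _ = ∑ S ∈ pc, ((Bᶜ.filter fun v => ¬ insert v S ∈ H).card : ℝ) := by
          exact_mod_cast congrArg (Nat.cast : ℕ → ℝ) hswap
  -- step 4
  have h4 : ∑ S ∈ pc, ((Bᶜ.filter fun v => ¬ insert v S ∈ H).card : ℝ)
      ≤ ∑ S ∈ pc, ((H.filter fun e => S ⊆ e ∧ e ⊆ B).card : ℝ) :=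
    Finset.sum_le_sum hperS
  -- step 5 in ℝ and edge bound
  have h6 : ∑ S ∈ pc, ((H.filter fun e => S ⊆ e ∧ e ⊆ B).card : ℝ)
      ≤ ξ * ((C : ℝ) * b) := by
    have h5R : ∑ S ∈ pc, ((H.filter fun e => S ⊆ e ∧ e ⊆ B).card : ℝ)
        = ((H.filter fun e => e ⊆ B).card : ℝ) * k := by
      exact_mod_cast congrArg (Nat.cast : ℕ → ℝ) h5
    have hchR : (C : ℝ) * ((b : ℝ) - ((k - 1 : ℕ) : ℝ)) = (k : ℝ) * (b.choose k : ℝ) := by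
      have hc : ((b - (k-1) : ℕ) : ℝ) = (b : ℝ) - ((k-1 : ℕ) : ℝ) := by
        rw [Nat.cast_sub (by omega)]
      rw [← hc]
      exact_mod_cast congrArg (Nat.cast : ℕ → ℝ) hch
    have hk0R : (0:ℝ) ≤ k := Nat.cast_nonneg k
    have hCR : (0:ℝ) ≤ C := Nat.cast_nonneg C
    have hkk : (0:ℝ) ≤ ((k - 1 : ℕ) : ℝ) := Nat.cast_nonneg _
    calc ∑ S ∈ pc, ((H.filter fun e => S ⊆ e ∧ e ⊆ B).card : ℝ)
        = ((H.filter fun e => e ⊆ B).card : ℝ) * k := h5R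
      _ ≤ (ξ * (b.choose k : ℝ)) * k := mul_le_mul_of_nonneg_right heB hk0R
      _ = (k : ℝ) * (b.choose k : ℝ) * ξ := by ring
      _ = (C : ℝ) * ((b : ℝ) - ((k - 1 : ℕ) : ℝ)) * ξ := by rw [hchR]
      _ ≤ (C : ℝ) * (b : ℝ) * ξ := by
          apply mul_le_mul_of_nonneg_right _ hξ0.le
          apply mul_le_mul_of_nonneg_left _ hCR
          linarith
      _ = ξ * ((C : ℝ) * b) := by ring
  -- combine
  have hmain : (bad.card : ℝ) * (ε₂ * C) ≤ ξ * ((C : ℝ) * b) := by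
    calc (bad.card : ℝ) * (ε₂ * C) ≤ _ := h1
      _ ≤ _ := h2
      _ = _ := h3
      _ ≤ _ := h4
      _ ≤ _ := h6
  have hξsplit : ξ ^ ((2:ℝ)/3) * ε₂ = ξ := by
    rw [hε₂def, ← Real.rpow_add hξ0]
    norm_num
  have hCRpos : (0:ℝ) < C := by exact_mod_cast hC0
  have hbR : (0:ℝ) ≤ b := Nat.cast_nonneg b
  have hstep : (bad.card : ℝ) ≤ ξ ^ ((2:ℝ)/3) * b := by
    have h := hmain
    rw [← hξsplit] at h
    have h' : (bad.card : ℝ) * (ε₂ * C) ≤ (ξ ^ ((2:ℝ)/3) * b) * (ε₂ * C) := by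
      calc (bad.card : ℝ) * (ε₂ * C) ≤ ξ ^ ((2:ℝ)/3) * ε₂ * ((C : ℝ) * b) := h
        _ = (ξ ^ ((2:ℝ)/3) * b) * (ε₂ * C) := by ring
    exact le_of_mul_le_mul_right h' (mul_pos hε₂0 hCRpos)
  have hpow : (0:ℝ) ≤ ξ ^ ((2:ℝ)/3) * b := mul_nonneg (Real.rpow_nonneg hξ0.le _) hbR
  linarith
end

section
/- Let X, Y be disjoint finite sets, t = |X|/a_1 for a positive integer a_1 dividing |X|, and m a positive integer with |Y| = (m - a_1)t. Let H be a k-graph on X ∪ Y such that every vertex v ∈ Y satisfies deg-complement(v, X Y^{k-1}) ≤ ρ·C(|Y|, k-1), where deg-complement counts non-edges among k-sets containing v with exactly one vertex in X and k-1 vertices in Y (including v). Define the (k-1)-graph 𝒢 on Y whose edges are the (k-1)-sets S ⊆ Y with deg-complement_H(S, X) < √ρ·t. Then δ_1(𝒢) ≥ (1 - m√ρ)·C(|Y|-1, k-2). -/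
/-!
Fix `v ∈ Y`. The `(k-1)`-sets `S ∋ v` in `Y` number `C(|Y|-1, k-2)`, and their
deg-complements sum to at most `ρ·C(|Y|,k-1) ≤ ρ·m·t·C(|Y|-1,k-2)`. By Markov's inequality
at most `m√ρ·C(|Y|-1,k-2)` of them have deg-complement at least `√ρ·t`.
-/

open Finset

theorem Nat.choose_succ_le_mul_choose_pred (n r : ℕ) :
    n.choose (r + 1) ≤ n * (n - 1).choose r := by
  rcases n with _ | n
  · simp
  · rw [Nat.add_sub_cancel, Nat.add_one_mul_choose_eq]
    exact Nat.le_mul_of_pos_right _ r.succ_pos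

theorem Finset.card_filter_mem_powersetCard_succ {α : Type*} [DecidableEq α] {s : Finset α}
    {v : α} (hv : v ∈ s) (n : ℕ) : #{S ∈ s.powersetCard (n + 1) | v ∈ S} = (#s - 1).choose n := by
  simpa using card_filter_powersetCard_subset {v} s (n + 1) (singleton_subset_iff.2 hv) (by simp)

theorem Finset.card_sub_sum_div_le_card_filter_lt {ι 𝕜 : Type*} [Field 𝕜] [LinearOrder 𝕜]
    [IsStrictOrderedRing 𝕜] (s : Finset ι) {f : ι → 𝕜} (hf : ∀ i ∈ s, 0 ≤ f i) {c : 𝕜}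
    (hc : 0 < c) : (#s : 𝕜) - (∑ i ∈ s, f i) / c ≤ #{i ∈ s | f i < c} := by
  have hlarge : (#{i ∈ s | ¬ f i < c} : 𝕜) * c ≤ ∑ i ∈ s, f i :=
    calc (#{i ∈ s | ¬ f i < c} : 𝕜) * c ≤ ∑ i ∈ s with ¬ f i < c, f i := by
          rw [← nsmul_eq_mul]
          exact card_nsmul_le_sum _ _ _ fun i hi => not_lt.1 (mem_filter.1 hi).2
      _ ≤ ∑ i ∈ s, f i :=
          sum_le_sum_of_subset_of_nonneg (filter_subset _ _) fun i hi _ => hf i hi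
  have hsplit : (#s : 𝕜) = #{i ∈ s | f i < c} + #{i ∈ s | ¬ f i < c} := by
    exact_mod_cast (card_filter_add_card_filter_not (s := s) (fun i => f i < c)).symm
  rw [← le_div_iff₀ hc] at hlarge
  linarith

theorem good_sets_min_degree_general {V : Type*} [DecidableEq V]
    (k a₁ m t : ℕ) (hk : 3 ≤ k)
    (ρ : ℝ) (hρ : 0 < ρ)
    (X Y : Finset V)
    (hY : Y.card = (m - a₁) * t)
    (H : Finset (Finset V))
    (hdegc : ∀ v ∈ Y,
      ((∑ S ∈ (Y.powersetCard (k - 1)).filter (fun S => v ∈ S),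
        (X.card - (X.filter (fun x => insert x S ∈ H)).card) : ℕ) : ℝ)
        ≤ ρ * ((Y.card.choose (k - 1)) : ℝ)) :
    ∀ v ∈ Y,
      (1 - (m : ℝ) * Real.sqrt ρ) * (((Y.card - 1).choose (k - 2)) : ℝ) ≤
        (((Y.powersetCard (k - 1)).filter (fun S => v ∈ S ∧
          (((X.card - (X.filter (fun x => insert x S ∈ H)).card : ℕ)) : ℝ)
            < Real.sqrt ρ * t)).card : ℝ) := by
  intro v hv
  obtain ⟨r, rfl⟩ : ∃ r, k = r + 2 := ⟨k - 2, by omega⟩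
  rw [show r + 2 - 1 = r + 1 from rfl, Nat.add_sub_cancel] at *
  set degc : Finset V → ℝ := fun S => ((#X - #{x ∈ X | insert x S ∈ H} : ℕ) : ℝ)
  set A := {S ∈ Y.powersetCard (r + 1) | v ∈ S}
  have hc : 0 < √ρ * t := by
    have : 0 < t := Nat.pos_of_ne_zero fun ht => by simp_all
    positivity
  have hchoose : (#Y).choose (r + 1) ≤ m * t * (#Y - 1).choose r :=
    (Nat.choose_succ_le_mul_choose_pred _ r).trans
      (Nat.mul_le_mul_right _ (hY ▸ Nat.mul_le_mul_right t (m.sub_le a₁)))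
  have hsum : (∑ S ∈ A, degc S) / (√ρ * t) ≤ m * √ρ * ((#Y - 1).choose r : ℕ) := by
    rw [div_le_iff₀ hc]
    calc ∑ S ∈ A, degc S ≤ ρ * ((#Y).choose (r + 1) : ℕ) := by
          simpa only [degc, A, Nat.cast_sum] using hdegc v hv
      _ ≤ ρ * (m * t * ((#Y - 1).choose r : ℕ)) := by gcongr; exact_mod_cast hchoose
      _ = m * √ρ * ((#Y - 1).choose r : ℕ) * (√ρ * t) := by
        nth_rewrite 1 [← Real.mul_self_sqrt hρ.le]; ring
  have hgood := card_sub_sum_div_le_card_filter_lt A (f := degc) (fun _ _ => Nat.cast_nonneg _) hc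
  rw [filter_filter, card_filter_mem_powersetCard_succ hv r] at hgood
  linarith

/-- Let `X, Y` be disjoint sets with `|X| = a₁t` and `|Y| = (m-a₁)t`, and let `H` be a
`k`-graph on `X ∪ Y` such that every `v ∈ Y` satisfies
`deg-complement(v, XY^{k-1}) ≤ ρ·C(|Y|,k-1)` (the sum over `(k-1)`-sets `S ⊆ Y`
containing `v` of the number of `x ∈ X` with `S ∪ {x} ∉ E(H)`).  Then in the
`(k-1)`-graph `𝒢` on `Y` whose edges are the `(k-1)`-sets `S ⊆ Y` with
`deg-complement_H(S, X) < √ρ·t`, every vertex of `Y` has degree at least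
`(1 - m√ρ)·C(|Y|-1, k-2)`. -/
theorem good_sets_min_degree {V : Type*} [DecidableEq V]
    (k a₁ m t : ℕ) (hk : 3 ≤ k) (ha : 1 ≤ a₁) (ham : a₁ < m)
    (ρ : ℝ) (hρ : 0 < ρ)
    (X Y : Finset V) (hXY : Disjoint X Y)
    (hX : X.card = a₁ * t) (hY : Y.card = (m - a₁) * t)
    (H : Finset (Finset V)) (huni : ∀ e ∈ H, e.card = k)
    (hdegc : ∀ v ∈ Y,
      ((∑ S ∈ (Y.powersetCard (k - 1)).filter (fun S => v ∈ S),
        (X.card - (X.filter (fun x => insert x S ∈ H)).card) : ℕ) : ℝ)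
        ≤ ρ * ((Y.card.choose (k - 1)) : ℝ)) :
    ∀ v ∈ Y,
      (1 - (m : ℝ) * Real.sqrt ρ) * (((Y.card - 1).choose (k - 2)) : ℝ) ≤
        (((Y.powersetCard (k - 1)).filter (fun S => v ∈ S ∧
          (((X.card - (X.filter (fun x => insert x S ∈ H)).card : ℕ)) : ℝ)
            < Real.sqrt ρ * t)).card : ℝ) :=
  good_sets_min_degree_general k a₁ m t hk ρ hρ X Y hY H hdegc
end
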